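/- Let ν > 0, η > 0, M ≥ 0, let s ∈ ℂ with Re s > η, and let g : [0,∞) → ℂ be continuous with |g(τ)| ≤ M e^{−ητ} for all τ ≥ 0. Define w(y) = −(1/(2νs)) ∫_0^∞ g(τ) e^{−s|τ−y|} dτ − (1/(2νs)) ∫_0^∞ g(τ) e^{−s(τ+y)} dτ. Then w is twice continuously differentiable on [0,∞), satisfies ν (w''(y) − s² w(y)) = g(y) for all y ≥ 0, and for all y ≥ 0 one has |w(y)| e^{ηy} ≤ 3M / (2ν |s| (Re s − η)). -/

import Mathlib

/-!
For `y ≥ 0`, splitting the integral at `τ = y` turns `e^{-s|τ-y|}` into `e^{-sy} e^{sτ}` or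
`e^{sy} e^{-sτ}`, so `w = -(2νs)⁻¹ (e^{-sy} (A y + B 0) + e^{sy} B y)` with
`A y = ∫₀^y g e^{sτ}` and `B y = ∫_y^∞ g e^{-sτ}`. Now `y` enters only through exponentials and
integration limits: the boundary terms `± g e^{∓sy}` cancel in the first derivative and add up in
the second, giving `w'' = s² w + g / ν`. To differentiate at `y = 0`, `g` is first extended
continuously to `ℝ` by `τ ↦ g (max τ 0)`.
The bound follows from `‖A y‖ ≤ M e^{(Re s - η) y} / (Re s - η)` and
`‖B y‖ ≤ M e^{-(Re s + η) y} / (Re s + η)`: each of the three terms of `w e^{ηy}` is at most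
`M / (2ν|s| (Re s - η))`.
-/

open MeasureTheory Set
open scoped Complex

section Calculus

variable {E : Type*} [NormedAddCommGroup E]

theorem contDiff_two_of_hasDerivAt [NormedSpace ℝ E] {f f' f'' : ℝ → E}
    (hf : ∀ x, HasDerivAt f (f' x) x) (hf' : ∀ x, HasDerivAt f' (f'' x) x)
    (hf'' : Continuous f'') : ContDiff ℝ 2 f := by
  have hd : deriv f = f' := funext fun x => (hf x).deriv
  have hd' : deriv f' = f'' := funext fun x => (hf' x).deriv
  rw [show (2 : WithTop ℕ∞) = 1 + 1 from rfl, contDiff_succ_iff_deriv, hd,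
    contDiff_one_iff_deriv, hd']
  exact ⟨fun x => (hf x).differentiableAt, by simp, fun x => (hf' x).differentiableAt, hf''⟩

theorem eqOn_derivWithin_Ici [NormedSpace ℝ E] {f F F' : ℝ → E} {a : ℝ}
    (hfF : EqOn f F (Ici a)) (hF : ∀ x ∈ Ici a, HasDerivAt F (F' x) x) :
    EqOn (derivWithin f (Ici a)) F' (Ici a) :=
  fun x hx => by
    rw [derivWithin_congr hfF (hfF hx)]
    exact (hF x hx).hasDerivWithinAt.derivWithin (uniqueDiffOn_Ici a x hx)

theorem Continuous.integrableOn_Ioi_of_integrableOn_Ioi {f : ℝ → E} (hf : Continuous f) {b : ℝ}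
    (hb : IntegrableOn f (Ioi b)) (a : ℝ) : IntegrableOn f (Ioi a) := by
  rcases le_total b a with hba | _
  · exact hb.mono_set (Ioi_subset_Ioi hba)
  · exact (hf.integrableOn_Icc.union hb).mono_set fun x (hx : a < x) =>
      (le_or_gt x b).imp (fun hxb => ⟨hx.le, hxb⟩) id

end Calculus

theorem hasDerivAt_cexp_mul (c : ℂ) (y : ℝ) :
    HasDerivAt (fun y : ℝ => cexp (c * y)) (c * cexp (c * y)) y := by
  simpa [mul_comm] using ((hasDerivAt_id y).ofReal_comp.const_mul c).cexp

theorem cexp_neg_mul_mul_cexp_mul (s : ℂ) (y : ℝ) : cexp (-s * y) * cexp (s * y) = 1 := by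
  rw [← Complex.exp_add, neg_mul, neg_add_cancel, Complex.exp_zero]

theorem norm_mul_cexp_le {z : ℂ} {M η τ : ℝ} (hz : ‖z‖ ≤ M * Real.exp (-η * τ)) (c : ℂ) :
    ‖z * cexp (c * τ)‖ ≤ M * Real.exp ((c.re - η) * τ) := by
  rw [norm_mul, Complex.norm_exp, Complex.re_mul_ofReal]
  calc ‖z‖ * Real.exp (c.re * τ) ≤ M * Real.exp (-η * τ) * Real.exp (c.re * τ) := by gcongr
    _ = M * Real.exp ((c.re - η) * τ) := by rw [mul_assoc, ← Real.exp_add]; ring_nf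

namespace HalfLineHelmholtz

variable (s : ℂ) (G : ℝ → ℂ)

noncomputable def headIntegral (y : ℝ) : ℂ := ∫ τ in (0 : ℝ)..y, G τ * cexp (s * τ)

noncomputable def tailIntegral (y : ℝ) : ℂ := ∫ τ in Ioi y, G τ * cexp (-s * τ)

-- For `0 ≤ y` this is `∫ τ in Ioi 0, G τ * (e^{-s|τ-y|} + e^{-s(τ+y)})`, by
-- `integral_kernel_eq_green`.
noncomputable def green (y : ℝ) : ℂ :=
  cexp (-s * y) * (headIntegral s G y + tailIntegral s G 0) + cexp (s * y) * tailIntegral s G y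

noncomputable def greenDeriv (y : ℝ) : ℂ :=
  cexp (-s * y) * (-s * (headIntegral s G y + tailIntegral s G 0)) +
    cexp (s * y) * (s * tailIntegral s G y)

variable {s G}

theorem hasDerivAt_headIntegral (hG : Continuous G) (y : ℝ) :
    HasDerivAt (headIntegral s G) (G y * cexp (s * y)) y :=
  ((hG.mul (by fun_prop)).integral_hasStrictDerivAt 0 y).hasDerivAt

theorem tailIntegral_eq_sub (hG : Continuous G)
    (hGi : IntegrableOn (fun τ => G τ * cexp (-s * τ)) (Ioi 0)) (y : ℝ) :
    tailIntegral s G y = tailIntegral s G 0 - ∫ τ in (0 : ℝ)..y, G τ * cexp (-s * τ) := by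
  rw [tailIntegral, tailIntegral, ← intervalIntegral.integral_Ioi_sub_Ioi' hGi
    ((hG.mul (by fun_prop)).integrableOn_Ioi_of_integrableOn_Ioi hGi y), sub_sub_cancel]

theorem hasDerivAt_tailIntegral (hG : Continuous G)
    (hGi : IntegrableOn (fun τ => G τ * cexp (-s * τ)) (Ioi 0)) (y : ℝ) :
    HasDerivAt (tailIntegral s G) (-(G y * cexp (-s * y))) y := by
  rw [funext (tailIntegral_eq_sub hG hGi)]
  exact (((hG.mul (by fun_prop)).integral_hasStrictDerivAt 0 y).hasDerivAt.const_sub _)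

theorem hasDerivAt_cexp_combination {P Q : ℝ → ℂ} {p q : ℂ} {y : ℝ} (hP : HasDerivAt P p y)
    (hQ : HasDerivAt Q q y) :
    HasDerivAt (fun y : ℝ => cexp (-s * y) * P y + cexp (s * y) * Q y)
      (cexp (-s * y) * (-s * P y) + cexp (s * y) * (s * Q y) +
        (cexp (-s * y) * p + cexp (s * y) * q)) y :=
  (((hasDerivAt_cexp_mul (-s) y).mul hP).add ((hasDerivAt_cexp_mul s y).mul hQ)).congr_deriv
    (by ring)

theorem hasDerivAt_green (hG : Continuous G)
    (hGi : IntegrableOn (fun τ => G τ * cexp (-s * τ)) (Ioi 0)) (y : ℝ) :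
    HasDerivAt (green s G) (greenDeriv s G y) y := by
  refine (hasDerivAt_cexp_combination ((hasDerivAt_headIntegral hG y).add_const _)
    (hasDerivAt_tailIntegral hG hGi y)).congr_deriv ?_
  rw [greenDeriv]
  ring

theorem hasDerivAt_greenDeriv (hG : Continuous G)
    (hGi : IntegrableOn (fun τ => G τ * cexp (-s * τ)) (Ioi 0)) (y : ℝ) :
    HasDerivAt (greenDeriv s G) (s ^ 2 * green s G y - 2 * s * G y) y := by
  refine (hasDerivAt_cexp_combination
    (((hasDerivAt_headIntegral hG y).add_const (tailIntegral s G 0)).const_mul (-s))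
    ((hasDerivAt_tailIntegral hG hGi y).const_mul s)).congr_deriv ?_
  rw [green]
  linear_combination (-2 * s * G y) * cexp_neg_mul_mul_cexp_mul s y

theorem contDiff_green (hG : Continuous G)
    (hGi : IntegrableOn (fun τ => G τ * cexp (-s * τ)) (Ioi 0)) : ContDiff ℝ 2 (green s G) := by
  have hcont : Continuous (green s G) :=
    continuous_iff_continuousAt.2 fun y => (hasDerivAt_green hG hGi y).continuousAt
  exact contDiff_two_of_hasDerivAt (hasDerivAt_green hG hGi) (hasDerivAt_greenDeriv hG hGi)
    ((continuous_const.mul hcont).sub (continuous_const.mul hG))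

theorem integral_kernel_eq_green (hG : Continuous G)
    (hGi : IntegrableOn (fun τ => G τ * cexp (-s * τ)) (Ioi 0)) {y : ℝ} (hy : 0 ≤ y) :
    (∫ τ in Ioi (0 : ℝ), G τ * cexp (-s * (|τ - y| : ℝ))) +
      ∫ τ in Ioi (0 : ℝ), G τ * cexp (-s * ((τ : ℂ) + y)) = green s G y := by
  have hnear : EqOn (fun τ : ℝ => G τ * cexp (-s * (|τ - y| : ℝ)))
      (fun τ => cexp (-s * y) * (G τ * cexp (s * τ))) (uIcc 0 y) := fun τ hτ => by
    rw [uIcc_of_le hy] at hτ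
    have : -s * ((|τ - y| : ℝ) : ℂ) = -s * y + s * τ := by
      rw [abs_of_nonpos (by linarith [hτ.2])]; push_cast; ring
    simp only [this, Complex.exp_add]; ring
  have hfar : EqOn (fun τ : ℝ => G τ * cexp (-s * (|τ - y| : ℝ)))
      (fun τ => cexp (s * y) * (G τ * cexp (-s * τ))) (Ioi y) := fun τ (hτ : y < τ) => by
    have : -s * ((|τ - y| : ℝ) : ℂ) = s * y + -s * τ := by
      rw [abs_of_nonneg (by linarith)]; push_cast; ring
    simp only [this, Complex.exp_add]; ring
  have hreflected : EqOn (fun τ : ℝ => G τ * cexp (-s * ((τ : ℂ) + y)))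
      (fun τ => cexp (-s * y) * (G τ * cexp (-s * τ))) (Ioi 0) := fun τ _ => by
    simp only [mul_add, Complex.exp_add]; ring
  have hfar_int : IntegrableOn (fun τ : ℝ => G τ * cexp (-s * (|τ - y| : ℝ))) (Ioi y) :=
    have hcont : Continuous fun τ : ℝ => G τ * cexp (-s * τ) := by fun_prop
    IntegrableOn.congr_fun ((hcont.integrableOn_Ioi_of_integrableOn_Ioi hGi y).const_mul _)
      hfar.symm measurableSet_Ioi
  have hnear_int : IntervalIntegrable (fun τ : ℝ => G τ * cexp (-s * (|τ - y| : ℝ))) volume 0 y :=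
    Continuous.intervalIntegrable (by fun_prop) 0 y
  rw [← intervalIntegral.integral_interval_add_Ioi' hnear_int hfar_int,
    intervalIntegral.integral_congr hnear, setIntegral_congr_fun measurableSet_Ioi hfar,
    setIntegral_congr_fun measurableSet_Ioi hreflected, intervalIntegral.integral_const_mul,
    integral_const_mul, integral_const_mul, green, headIntegral, tailIntegral, tailIntegral]
  ring

section Bounds

variable {M η : ℝ}

theorem norm_mul_cexp_neg_le {z : ℂ} {τ : ℝ} (hz : ‖z‖ ≤ M * Real.exp (-η * τ)) :
    ‖z * cexp (-s * τ)‖ ≤ M * Real.exp (-(s.re + η) * τ) := by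
  simpa only [Complex.neg_re, neg_add'] using norm_mul_cexp_le hz (-s)

theorem integrableOn_Ioi_mul_cexp_neg (hG : Continuous G)
    (hGb : ∀ τ ∈ Ici (0 : ℝ), ‖G τ‖ ≤ M * Real.exp (-η * τ)) (hsη : 0 < s.re + η) :
    IntegrableOn (fun τ => G τ * cexp (-s * τ)) (Ioi 0) :=
  Integrable.mono' ((integrableOn_exp_mul_Ioi (neg_neg_of_pos hsη) 0).const_mul M)
    (Continuous.aestronglyMeasurable (by fun_prop))
    ((ae_restrict_iff' measurableSet_Ioi).2 (ae_of_all _ fun τ (hτ : 0 < τ) =>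
      norm_mul_cexp_neg_le (hGb τ hτ.le)))

theorem norm_tailIntegral_le (hGb : ∀ τ ∈ Ici (0 : ℝ), ‖G τ‖ ≤ M * Real.exp (-η * τ))
    (hsη : 0 < s.re + η) {z : ℝ} (hz : 0 ≤ z) :
    ‖tailIntegral s G z‖ ≤ M / (s.re + η) * Real.exp (-(s.re + η) * z) :=
  calc ‖tailIntegral s G z‖ ≤ ∫ τ in Ioi z, M * Real.exp (-(s.re + η) * τ) :=
        norm_integral_le_of_norm_le
          ((integrableOn_exp_mul_Ioi (neg_neg_of_pos hsη) z).const_mul M)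
          ((ae_restrict_iff' measurableSet_Ioi).2 (ae_of_all _ fun τ (hτ : z < τ) =>
            norm_mul_cexp_neg_le (hGb τ (hz.trans hτ.le))))
    _ = M / (s.re + η) * Real.exp (-(s.re + η) * z) := by
        rw [integral_const_mul, integral_exp_mul_Ioi (neg_neg_of_pos hsη), neg_div_neg_eq]
        ring

theorem norm_headIntegral_le (hM : 0 ≤ M) (hGb : ∀ τ ∈ Ici (0 : ℝ), ‖G τ‖ ≤ M * Real.exp (-η * τ))
    (hsη : η < s.re) {y : ℝ} (hy : 0 ≤ y) :
    ‖headIntegral s G y‖ ≤ M / (s.re - η) * Real.exp ((s.re - η) * y) := by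
  have hκ : 0 < s.re - η := sub_pos.2 hsη
  calc ‖headIntegral s G y‖ ≤ ∫ τ in (0 : ℝ)..y, M * Real.exp ((s.re - η) * τ) :=
        intervalIntegral.norm_integral_le_of_norm_le hy
          (ae_of_all _ fun τ hτ => norm_mul_cexp_le (hGb τ hτ.1.le) s)
          (Continuous.intervalIntegrable (by fun_prop) 0 y)
    _ ≤ ∫ τ in Iic y, M * Real.exp ((s.re - η) * τ) := by
        rw [intervalIntegral.integral_of_le hy]
        exact setIntegral_mono_set ((integrableOn_exp_mul_Iic hκ y).const_mul M)
          (ae_of_all _ fun τ => by simp only [Pi.zero_apply]; positivity)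
          Ioc_subset_Iic_self.eventuallyLE
    _ = M / (s.re - η) * Real.exp ((s.re - η) * y) := by
        rw [integral_const_mul, integral_exp_mul_Iic hκ]
        ring

theorem norm_green_mul_exp_le (hM : 0 ≤ M) (hη : 0 ≤ η) (hsη : η < s.re)
    (hGb : ∀ τ ∈ Ici (0 : ℝ), ‖G τ‖ ≤ M * Real.exp (-η * τ)) {y : ℝ} (hy : 0 ≤ y) :
    ‖green s G y‖ * Real.exp (η * y) ≤ 3 * M / (s.re - η) := by
  set σ := s.re
  have hκ : 0 < σ - η := sub_pos.2 hsη
  have hση : 0 < σ + η := by linarith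
  have hnorm : ‖green s G y‖ ≤ Real.exp (-σ * y) *
      (‖headIntegral s G y‖ + ‖tailIntegral s G 0‖) + Real.exp (σ * y) * ‖tailIntegral s G y‖ := by
    refine (norm_add_le _ _).trans ?_
    rw [norm_mul, norm_mul, Complex.norm_exp, Complex.norm_exp, Complex.re_mul_ofReal,
      Complex.re_mul_ofReal, Complex.neg_re]
    gcongr
    exact norm_add_le _ _
  have hweights : M / (σ + η) ≤ M / (σ - η) := div_le_div_of_nonneg_left hM hκ (by linarith)
  have hdecay : Real.exp (-(σ - η) * y) ≤ 1 := Real.exp_le_one_iff.2 (by nlinarith)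
  calc ‖green s G y‖ * Real.exp (η * y)
      ≤ (Real.exp (-σ * y) * (M / (σ - η) * Real.exp ((σ - η) * y) +
          M / (σ + η) * Real.exp (-(σ + η) * 0)) +
        Real.exp (σ * y) * (M / (σ + η) * Real.exp (-(σ + η) * y))) * Real.exp (η * y) := by
        gcongr
        refine hnorm.trans ?_
        gcongr
        exacts [norm_headIntegral_le hM hGb hsη hy, norm_tailIntegral_le hGb hση le_rfl,
          norm_tailIntegral_le hGb hση hy]
    _ = M / (σ - η) + M / (σ + η) * Real.exp (-(σ - η) * y) + M / (σ + η) := by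
        simp only [neg_mul, sub_mul, add_mul, Real.exp_neg, Real.exp_sub, Real.exp_add, mul_zero,
          Real.exp_zero]
        field_simp
    _ ≤ M / (σ - η) + M / (σ - η) * 1 + M / (σ - η) := by gcongr
    _ = 3 * M / (σ - η) := by ring

end Bounds

end HalfLineHelmholtz

open HalfLineHelmholtz

/-- The kernel `e^{-s|τ-y|}` solves the modified Helmholtz equation
`ν(w'' - s² w) = g` on the half line, with the weighted bound
`|w(y)| e^{ηy} ≤ 3M/(2ν|s|(Re s - η))` for exponentially decaying data. -/
theorem stmt_4 (ν η M : ℝ) (hν : 0 < ν) (hη : 0 < η) (hM : 0 ≤ M)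
    (s : ℂ) (hs : η < s.re)
    (g : ℝ → ℂ) (hg_cont : ContinuousOn g (Ici 0))
    (hg : ∀ τ ∈ Ici (0:ℝ), ‖g τ‖ ≤ M * Real.exp (-η * τ))
    (w : ℝ → ℂ)
    (hw : ∀ y : ℝ, w y =
      -(1 / (2 * ν * s)) * (∫ τ in Ioi (0:ℝ), g τ * Complex.exp (-s * (|τ - y| : ℝ)))
      - (1 / (2 * ν * s)) * ∫ τ in Ioi (0:ℝ), g τ * Complex.exp (-s * ((τ : ℂ) + (y : ℂ)))) :
    ContDiffOn ℝ 2 w (Ici 0) ∧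
    (∀ y ∈ Ici (0:ℝ),
      (ν : ℂ) * (derivWithin (derivWithin w (Ici 0)) (Ici 0) y - s ^ 2 * w y) = g y) ∧
    (∀ y ∈ Ici (0:ℝ),
      ‖w y‖ * Real.exp (η * y) ≤
        3 * M / (2 * ν * ‖s‖ * (s.re - η))) := by
  set G : ℝ → ℂ := fun τ => g (max τ 0)
  have hGg : EqOn G g (Ici 0) := fun τ hτ => congrArg g (max_eq_left hτ)
  have hG : Continuous G :=
    hg_cont.comp_continuous (continuous_id.max continuous_const) fun τ => le_max_right τ 0
  have hGb : ∀ τ ∈ Ici (0 : ℝ), ‖G τ‖ ≤ M * Real.exp (-η * τ) := fun τ hτ => hGg hτ ▸ hg τ hτ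
  have hGi := integrableOn_Ioi_mul_cexp_neg hG hGb (by linarith : 0 < s.re + η)
  have hwF : EqOn w (fun y => -(1 / (2 * ν * s)) * green s G y) (Ici 0) := fun y hy => by
    have hgG : ∀ k : ℝ → ℂ, ∫ τ in Ioi (0 : ℝ), g τ * k τ = ∫ τ in Ioi (0 : ℝ), G τ * k τ :=
      fun k => setIntegral_congr_fun measurableSet_Ioi fun τ hτ => by rw [hGg (mem_Ioi.1 hτ).le]
    dsimp only
    rw [hw y, hgG, hgG, ← integral_kernel_eq_green hG hGi hy]
    ring
  have hw' := eqOn_derivWithin_Ici hwF fun y _ => (hasDerivAt_green hG hGi y).const_mul _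
  have hw'' := eqOn_derivWithin_Ici hw' fun y _ => (hasDerivAt_greenDeriv hG hGi y).const_mul _
  refine ⟨(contDiff_const.mul (contDiff_green hG hGi)).contDiffOn.congr hwF, fun y hy => ?_,
    fun y hy => ?_⟩
  · have hs0 : s ≠ 0 := by rintro rfl; simp only [Complex.zero_re] at hs; linarith
    have hν0 : (ν : ℂ) ≠ 0 := by exact_mod_cast hν.ne'
    rw [hw'' hy, hwF hy, ← hGg hy]
    field_simp
    ring
  · have hc : ‖-(1 / (2 * ν * s))‖ = 1 / (2 * ν * ‖s‖) := by simp [abs_of_pos hν]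
    rw [hwF hy, norm_mul, hc, mul_assoc]
    calc 1 / (2 * ν * ‖s‖) * (‖green s G y‖ * Real.exp (η * y))
        ≤ 1 / (2 * ν * ‖s‖) * (3 * M / (s.re - η)) := by
          gcongr
          exact norm_green_mul_exp_le hM hη.le hs hGb hy
      _ = 3 * M / (2 * ν * ‖s‖ * (s.re - η)) := by field_simp
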